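/- (Negative energy of the explicit radial profile.) Let d ≥ 1 be an integer, σ > 0, let f : ℝ → ℝ be bistable with threshold θ satisfying condition (1) with θ_c, and let α ∈ (θ_c,1]. Let R > 0 satisfy R + 1 ≥ R_α. Then ∫₀^R (−F(α))·r^{d−1} dr + ∫_R^{R+1} (σα²/2 − F(α(R+1−r)))·r^{d−1} dr < 0. (This quantity equals ∫₀^∞ (σ/2·φ_R'(r)² − F(φ_R(r)))·r^{d−1} dr for the profile φ_R(r) = α on [0,R], φ_R(r) = α(R+1−r) on [R,R+1], φ_R(r) = 0 for r ≥ R+1, so the profile φ_R has negative energy.) -/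

import Mathlib

open Set MeasureTheory

/-- `f` is bistable with threshold `θ`. -/
def Bistable (f : ℝ → ℝ) (θ : ℝ) : Prop :=
  Continuous f ∧ θ ∈ Set.Ioo (0:ℝ) 1 ∧ f 0 = 0 ∧ f θ = 0 ∧ f 1 = 0 ∧
  (∀ p ∈ Set.Ioo 0 θ, f p < 0) ∧ (∀ p ∈ Set.Ioo θ 1, f p > 0)

/-- `F(z) = ∫₀^z f`. -/
noncomputable def Fint (f : ℝ → ℝ) (z : ℝ) : ℝ := ∫ ξ in (0:ℝ)..z, f ξ
/-- The radius `R_α`. -/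
noncomputable def Ralpha (d : ℕ) (σ : ℝ) (f : ℝ → ℝ) (θ α : ℝ) : ℝ :=
  ((1 + 2 * Fint f α / (σ * α ^ 2 - 2 * Fint f θ)) ^ ((1:ℝ)/d) - 1)⁻¹ + 1

/-!
`F` decreases on `[0, θ]` and increases on `[θ, 1]`, so `θ` minimises `F` on `[0, 1]`, and
`F α > F θc = 0`. Bounding `F (α (R + 1 - r)) ≥ F θ` on the ramp (strictly near `r = R`) and
integrating `r ^ (d - 1)` gives, with `A = σ α² / 2 - F θ > 0`,
`d · energy < A ((R + 1)^d - R^d) - F α · R^d`. Unwinding `R_α`, the hypothesis `R + 1 ≥ R_α`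
says exactly `(R + 1)^d ≤ (1 + F α / A) R^d`, which makes the right-hand side nonpositive.
-/

open intervalIntegral

theorem Fint_sub_Fint {f : ℝ → ℝ} (hf : Continuous f) (a b : ℝ) :
    Fint f b - Fint f a = ∫ x in a..b, f x :=
  integral_interval_sub_left (hf.intervalIntegrable _ _) (hf.intervalIntegrable _ _)

theorem continuous_Fint {f : ℝ → ℝ} (hf : Continuous f) : Continuous (Fint f) :=
  continuous_primitive (fun a b => hf.intervalIntegrable a b) 0

namespace Bistable

variable {f : ℝ → ℝ} {θ : ℝ}

theorem strictAntiOn_Fint (hbi : Bistable f θ) : StrictAntiOn (Fint f) (Icc 0 θ) := by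
  obtain ⟨hf, -, -, -, -, hneg, -⟩ := hbi
  intro a ha b hb hab
  rw [← sub_pos, ← neg_sub, Fint_sub_Fint hf, ← intervalIntegral.integral_neg]
  exact intervalIntegral_pos_of_pos_on (hf.neg.intervalIntegrable _ _)
    (fun x hx => neg_pos.2 (hneg x ⟨ha.1.trans_lt hx.1, hx.2.trans_le hb.2⟩)) hab

theorem strictMonoOn_Fint (hbi : Bistable f θ) : StrictMonoOn (Fint f) (Icc θ 1) := by
  obtain ⟨hf, -, -, -, -, -, hpos⟩ := hbi
  intro a ha b hb hab
  rw [← sub_pos, Fint_sub_Fint hf]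
  exact intervalIntegral_pos_of_pos_on (hf.intervalIntegrable _ _)
    (fun x hx => hpos x ⟨ha.1.trans_lt hx.1, hx.2.trans_le hb.2⟩) hab

theorem isMinOn_Fint (hbi : Bistable f θ) : IsMinOn (Fint f) (Icc 0 1) θ := by
  obtain ⟨hθ0, hθ1⟩ := hbi.2.1
  intro z hz
  rcases le_total z θ with hzθ | hθz
  · exact hbi.strictAntiOn_Fint.antitoneOn ⟨hz.1, hzθ⟩ ⟨hθ0.le, le_rfl⟩ hzθ
  · exact hbi.strictMonoOn_Fint.monotoneOn ⟨le_rfl, hθ1.le⟩ ⟨hθz, hz.2⟩ hθz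

theorem integral_ramp_lt_integral_threshold (hbi : Bistable f θ) {α : ℝ} (hθα : θ < α)
    (hα1 : α ≤ 1) {R : ℝ} (hR : 0 < R) (c : ℝ) (n : ℕ) :
    ∫ r in R..R + 1, (c - Fint f (α * (R + 1 - r))) * r ^ n <
      ∫ r in R..R + 1, (c - Fint f θ) * r ^ n := by
  have hα0 : 0 < α := hbi.2.1.1.trans hθα
  have hF := continuous_Fint hbi.1
  refine integral_lt_integral_of_continuousOn_of_le_of_exists_lt (by linarith)
    (by fun_prop) (by fun_prop) (fun r hr => ?_) ⟨R, ⟨le_rfl, by linarith⟩, ?_⟩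
  · have hz : α * (R + 1 - r) ∈ Icc 0 1 :=
      ⟨by nlinarith [hr.2], by nlinarith [hr.1]⟩
    gcongr
    · exact pow_nonneg (hR.trans hr.1).le _
    · exact hbi.isMinOn_Fint hz
  · have : Fint f θ < Fint f α :=
      hbi.strictMonoOn_Fint ⟨le_rfl, hbi.2.1.2.le⟩ ⟨hθα.le, hα1⟩ hθα
    rw [show α * (R + 1 - R) = α by ring]
    gcongr

end Bistable

theorem pos_and_add_one_pow_le_of_inv_rpow_sub_one_le {d : ℕ} (hd : d ≠ 0) {x R : ℝ}
    (hx : 1 < x) (hR : (x ^ ((1:ℝ) / d) - 1)⁻¹ ≤ R) : 0 < R ∧ (R + 1) ^ d ≤ x * R ^ d := by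
  set c := x ^ ((1:ℝ) / d) with hc
  have hc1 : 1 < c := Real.one_lt_rpow hx (by positivity)
  have hcd : c ^ d = x := by
    rw [hc, ← Real.rpow_natCast, ← Real.rpow_mul (by linarith), one_div,
      inv_mul_cancel₀ (by exact_mod_cast hd), Real.rpow_one]
  have hR0 : 0 < R := (inv_pos.2 (sub_pos.2 hc1)).trans_le hR
  have hRc : R + 1 ≤ c * R := by
    have := (inv_le_iff_one_le_mul₀' (sub_pos.2 hc1)).1 hR
    linarith
  refine ⟨hR0, ?_⟩
  calc (R + 1) ^ d ≤ (c * R) ^ d := by gcongr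
    _ = x * R ^ d := by rw [mul_pow, hcd]

theorem energy_of_profile_neg_general
    (d : ℕ) (hd : 1 ≤ d) (σ : ℝ) (hσ : 0 < σ)
    (f : ℝ → ℝ) (θ θc : ℝ) (hbi : Bistable f θ)
    (hθc : θc ∈ Set.Ioo θ 1) (hFθc : Fint f θc = 0)
    (α : ℝ) (hα : α ∈ Set.Ioc θc 1)
    (R : ℝ) (hRα : R + 1 ≥ Ralpha d σ f θ α) :
    (∫ r in (0:ℝ)..R, (-(Fint f α)) * r ^ (d - 1)) +
      (∫ r in R..(R + 1), (σ * α ^ 2 / 2 - Fint f (α * (R + 1 - r))) * r ^ (d - 1)) < 0 := by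
  obtain ⟨n, rfl⟩ : ∃ n, d = n + 1 := ⟨d - 1, by omega⟩
  have hFα : 0 < Fint f α :=
    hFθc ▸ hbi.strictMonoOn_Fint ⟨hθc.1.le, hθc.2.le⟩ ⟨hθc.1.le.trans hα.1.le, hα.2⟩ hα.1
  have hFθ : Fint f θ ≤ 0 :=
    (hbi.isMinOn_Fint ⟨le_rfl, zero_le_one⟩).trans_eq intervalIntegral.integral_same
  have hα0 : 0 < α := hbi.2.1.1.trans (hθc.1.trans hα.1)
  set D := σ * α ^ 2 - 2 * Fint f θ with hD_def
  have hD : 0 < D := by have := mul_pos hσ (pow_pos hα0 2); linarith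
  obtain ⟨hR, hpow⟩ := pos_and_add_one_pow_le_of_inv_rpow_sub_one_le n.succ_ne_zero
    (x := 1 + 2 * Fint f α / D) (R := R) (by have := div_pos (mul_pos two_pos hFα) hD; linarith)
    (by rw [Ralpha] at hRα; linarith)
  have hkey : D * (R + 1) ^ (n + 1) ≤ D * R ^ (n + 1) + 2 * Fint f α * R ^ (n + 1) := by
    have := mul_le_mul_of_nonneg_left hpow hD.le
    rwa [show D * ((1 + 2 * Fint f α / D) * R ^ (n + 1)) =
      D * R ^ (n + 1) + 2 * Fint f α * R ^ (n + 1) by field_simp] at this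
  calc _ < (∫ r in (0:ℝ)..R, (-(Fint f α)) * r ^ n) +
        ∫ r in R..R + 1, (σ * α ^ 2 / 2 - Fint f θ) * r ^ n := by
        simpa using hbi.integral_ramp_lt_integral_threshold (hθc.1.trans hα.1) hα.2 hR _ n
    _ = (D * ((R + 1) ^ (n + 1) - R ^ (n + 1)) - 2 * Fint f α * R ^ (n + 1)) / (2 * (n + 1)) := by
        simp only [intervalIntegral.integral_const_mul, integral_pow, hD_def]
        field_simp
        ring
    _ ≤ 0 := div_nonpos_of_nonpos_of_nonneg (by linarith) (by positivity)

/-- Negative energy of the explicit radial profile `φ_R`: if `R + 1 ≥ R_α` then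
`∫₀^R (-F(α)) r^{d-1} dr + ∫_R^{R+1} (σα²/2 - F(α(R+1-r))) r^{d-1} dr < 0`. -/
theorem energy_of_profile_neg
    (d : ℕ) (hd : 1 ≤ d) (σ : ℝ) (hσ : 0 < σ)
    (f : ℝ → ℝ) (θ θc : ℝ) (hbi : Bistable f θ)
    (hθc : θc ∈ Set.Ioo θ 1) (hFθc : Fint f θc = 0)
    (α : ℝ) (hα : α ∈ Set.Ioc θc 1)
    (R : ℝ) (hR : 0 < R) (hRα : R + 1 ≥ Ralpha d σ f θ α) :
    (∫ r in (0:ℝ)..R, (-(Fint f α)) * r ^ (d - 1)) +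
      (∫ r in R..(R + 1), (σ * α ^ 2 / 2 - Fint f (α * (R + 1 - r))) * r ^ (d - 1)) < 0 :=
  energy_of_profile_neg_general d hd σ hσ f θ θc hbi hθc hFθc α hα R hRα
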